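/- arXiv:2602.14274 — 4 statements merged into one kernel-verified Lean document; each statement's English description precedes it below -/
import Mathlib

section
/- Under the IRM with ML proxies, the conditional expectation of the doubly robust label given the covariates satisfies E[c(η̃) | σ(Z)] = θ(Z) + bias₁ + bias₂ almost surely. -/
/-!
On each of the events `T = 0` and `T = 1` the doubly robust label splits as
`c = W + K * T + H̃ * U`, where `U = Y - g_T(Z)` is the model noise, `H̃` is a function of `(T, Z)`
and `W`, `K` are functions of `Z` alone. Conditioning on `σ(T, Z)` first kills `H̃ * U`; pulling
`K` out of `E[K * T | σ(Z)]` leaves `W + K * μ(Z)`, which is `θ(Z) + bias₁ + bias₂` by algebra.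
The bounds `ε ≤ μ̃ ≤ 1 - ε` keep the inverse propensity weights bounded, which is all that the
integrability side conditions need.
-/

open MeasureTheory ProbabilityTheory

theorem dr_label_decomposition {t q y a₀ a₁ b₀ b₁ : ℝ} (ht : t = 0 ∨ t = 1) :
    b₁ - b₀ + (t / q - (1 - t) / (1 - q)) * (y - if t = 1 then b₁ else b₀) =
      (b₁ - b₀ - (a₀ - b₀) / (1 - q)) + ((a₁ - b₁) / q + (a₀ - b₀) / (1 - q)) * t +
        (t / q - (1 - t) / (1 - q)) * (y - if t = 1 then a₁ else a₀) := by
  rcases ht with rfl | rfl <;> simp only [zero_ne_one, ↓reduceIte] <;> ring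

theorem dr_regression_eq_add_bias (p q a₀ a₁ b₀ b₁ : ℝ) :
    (b₁ - b₀ - (a₀ - b₀) / (1 - q)) + ((a₁ - b₁) / q + (a₀ - b₀) / (1 - q)) * p =
      a₁ - a₀ + (p / q - 1) * (a₁ - b₁) + (1 - (1 - p) / (1 - q)) * (a₀ - b₀) := by
  ring

theorem inv_abs_le_inv_of_le {q ε : ℝ} (hε : 0 < ε) (hq : ε ≤ q) : |q|⁻¹ ≤ ε⁻¹ := by
  rw [abs_of_pos (hε.trans_le hq)]
  exact inv_anti₀ hε hq

theorem abs_ipw_weight_le {t q ε : ℝ} (ht : t = 0 ∨ t = 1) (hε : 0 < ε) (hq : ε ≤ q)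
    (hq' : q ≤ 1 - ε) : |t / q - (1 - t) / (1 - q)| ≤ ε⁻¹ := by
  rcases ht with rfl | rfl
  · simpa using inv_abs_le_inv_of_le hε (by linarith : ε ≤ 1 - q)
  · simpa using inv_abs_le_inv_of_le hε hq

theorem MeasureTheory.Integrable.div_of_le {Ω : Type*} [MeasurableSpace Ω] {μ : Measure Ω}
    {f g : Ω → ℝ} {ε : ℝ} (hf : Integrable f μ) (hg : AEMeasurable g μ)
    (hε : 0 < ε) (hgε : ∀ᵐ ω ∂μ, ε ≤ g ω) : Integrable (fun ω => f ω / g ω) μ := by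
  simp_rw [div_eq_mul_inv]
  refine hf.mul_bdd (c := ε⁻¹) hg.inv.aestronglyMeasurable (hgε.mono fun ω h => ?_)
  rw [norm_inv, Real.norm_eq_abs]
  exact inv_abs_le_inv_of_le hε h

section CondExp

variable {Ω : Type*} {m m₂ m₀ : MeasurableSpace Ω} {μ : Measure[m₀] Ω} [IsFiniteMeasure μ]

theorem condExp_mul_eq_zero_of_condExp_eq_zero {f g : Ω → ℝ} (hm : m ≤ m₂) (hm₂ : m₂ ≤ m₀)
    (hf : StronglyMeasurable[m₂] f) (hfg : Integrable (f * g) μ) (hg : Integrable g μ)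
    (hg0 : μ[g | m₂] =ᵐ[μ] 0) : μ[f * g | m] =ᵐ[μ] 0 :=
  calc μ[f * g | m] =ᵐ[μ] μ[μ[f * g | m₂] | m] := (condExp_condExp_of_le hm hm₂).symm
    _ =ᵐ[μ] μ[f * μ[g | m₂] | m] :=
      condExp_congr_ae (condExp_mul_of_stronglyMeasurable_left hf hfg hg)
    _ =ᵐ[μ] μ[0 | m] := condExp_congr_ae (hg0.mono fun ω h => by simp [h])
    _ = 0 := condExp_zero

theorem condExp_add_mul_add_mul {W K T H U p : Ω → ℝ} (hm : m ≤ m₂) (hm₂ : m₂ ≤ m₀)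
    (hW : StronglyMeasurable[m] W) (hK : StronglyMeasurable[m] K)
    (hH : StronglyMeasurable[m₂] H)
    (hWi : Integrable W μ) (hT : Integrable T μ) (hKT : Integrable (K * T) μ)
    (hU : Integrable U μ) (hHU : Integrable (H * U) μ)
    (hTp : μ[T | m] =ᵐ[μ] p) (hU0 : μ[U | m₂] =ᵐ[μ] 0) :
    μ[W + K * T + H * U | m] =ᵐ[μ] W + K * p :=
  calc μ[W + K * T + H * U | m] =ᵐ[μ] μ[W | m] + μ[K * T | m] + μ[H * U | m] :=
        (condExp_add (hWi.add hKT) hHU m).trans ((condExp_add hWi hKT m).add .rfl)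
    _ =ᵐ[μ] W + K * p + 0 := by
      refine .add (.add ?_ ?_) (condExp_mul_eq_zero_of_condExp_eq_zero hm hm₂ hH hHU hU hU0)
      · rw [condExp_of_stronglyMeasurable (hm.trans hm₂) hW hWi]
      · exact (condExp_mul_of_stronglyMeasurable_left hK hKT hT).trans
          (hTp.mono fun ω h => by simp [h])
    _ = W + K * p := add_zero _

end CondExp

theorem condexp_doubly_robust_label_general
    {Ω : Type*} [MeasurableSpace Ω] (P : Measure Ω) [IsProbabilityMeasure P]
    {𝓩 : Type*} [MeasurableSpace 𝓩]
    (Y T : Ω → ℝ) (Z : Ω → 𝓩)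
    (hTm : Measurable T) (hZm : Measurable Z)
    (hTbin : ∀ ω, T ω = 0 ∨ T ω = 1)
    (g0 g1 p : 𝓩 → ℝ) (hg0m : Measurable g0) (hg1m : Measurable g1)
    (hU : MeasureTheory.condExp
        (MeasurableSpace.comap (fun ω => (T ω, Z ω)) inferInstance) P
        (fun ω => Y ω - (if T ω = 1 then g1 (Z ω) else g0 (Z ω))) =ᵐ[P] 0)
    (hprop : (fun ω => p (Z ω)) =ᵐ[P]
        MeasureTheory.condExp (MeasurableSpace.comap Z inferInstance) P T)
    (gt0 gt1 pt : 𝓩 → ℝ)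
    (hgt0m : Measurable gt0) (hgt1m : Measurable gt1) (hptm : Measurable pt)
    (ε : ℝ) (hε0 : 0 < ε)
    (hptbd : ∀ᵐ ω ∂P, ε ≤ pt (Z ω) ∧ pt (Z ω) ≤ 1 - ε)
    (θ : Ω → ℝ) (hθ : θ = fun ω => g1 (Z ω) - g0 (Z ω))
    (Ht : Ω → ℝ) (hHt : Ht = fun ω => T ω / pt (Z ω) - (1 - T ω) / (1 - pt (Z ω)))
    (c : Ω → ℝ)
    (hc : c = fun ω => gt1 (Z ω) - gt0 (Z ω) +
      Ht ω * (Y ω - (if T ω = 1 then gt1 (Z ω) else gt0 (Z ω))))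
    (bias1 bias2 : Ω → ℝ)
    (hbias1 : bias1 = fun ω => (p (Z ω) / pt (Z ω) - 1) * (g1 (Z ω) - gt1 (Z ω)))
    (hbias2 : bias2 = fun ω =>
      (1 - (1 - p (Z ω)) / (1 - pt (Z ω))) * (g0 (Z ω) - gt0 (Z ω)))
    (hYint : Integrable Y P)
    (hg0int : Integrable (fun ω => g0 (Z ω)) P) (hg1int : Integrable (fun ω => g1 (Z ω)) P)
    (hgt0int : Integrable (fun ω => gt0 (Z ω)) P)
    (hgt1int : Integrable (fun ω => gt1 (Z ω)) P)
    :
    MeasureTheory.condExp (MeasurableSpace.comap Z inferInstance) P c =ᵐ[P]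
      (fun ω => θ ω + bias1 ω + bias2 ω) := by
  subst hθ hHt hc hbias1 hbias2
  have hZ : Measurable[MeasurableSpace.comap Z inferInstance] Z := comap_measurable Z
  have hTZ : Measurable[MeasurableSpace.comap (fun ω => (T ω, Z ω)) inferInstance]
      (fun ω => (T ω, Z ω)) := comap_measurable _
  have hpt0 : ∀ᵐ ω ∂P, ε ≤ pt (Z ω) := hptbd.mono fun _ h => h.1
  have hpt1 : ∀ᵐ ω ∂P, ε ≤ 1 - pt (Z ω) := hptbd.mono fun _ h => by linarith [h.2]
  set W := fun ω => gt1 (Z ω) - gt0 (Z ω) - (g0 (Z ω) - gt0 (Z ω)) / (1 - pt (Z ω))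
  set K := fun ω => (g1 (Z ω) - gt1 (Z ω)) / pt (Z ω) + (g0 (Z ω) - gt0 (Z ω)) / (1 - pt (Z ω))
  set H := fun ω => T ω / pt (Z ω) - (1 - T ω) / (1 - pt (Z ω))
  set U := fun ω => Y ω - if T ω = 1 then g1 (Z ω) else g0 (Z ω)
  have hT1 : ∀ᵐ ω ∂P, ‖T ω‖ ≤ 1 :=
    ae_of_all _ fun ω => by rcases hTbin ω with h | h <;> simp [h]
  have hHε : ∀ᵐ ω ∂P, ‖H ω‖ ≤ ε⁻¹ :=
    hptbd.mono fun ω h => abs_ipw_weight_le (hTbin ω) hε0 h.1 h.2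
  have hWi : Integrable W P :=
    (hgt1int.sub hgt0int).sub ((hg0int.sub hgt0int).div_of_le (by fun_prop) hε0 hpt1)
  have hKi : Integrable K P :=
    ((hg1int.sub hgt1int).div_of_le (by fun_prop) hε0 hpt0).add
      ((hg0int.sub hgt0int).div_of_le (by fun_prop) hε0 hpt1)
  have hUi : Integrable U P := hYint.sub <|
    Integrable.piecewise (s := {ω | T ω = 1}) (hTm (measurableSet_singleton 1))
      hg1int.integrableOn hg0int.integrableOn
  have hc : (fun ω => gt1 (Z ω) - gt0 (Z ω) +
      H ω * (Y ω - if T ω = 1 then gt1 (Z ω) else gt0 (Z ω))) = W + K * T + H * U :=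
    funext fun ω => dr_label_decomposition (hTbin ω)
  rw [hc]
  refine (condExp_add_mul_add_mul (measurable_snd.comp hTZ).comap_le (hTm.prodMk hZm).comap_le
    (by fun_prop : Measurable[MeasurableSpace.comap Z inferInstance] W).stronglyMeasurable
    (by fun_prop : Measurable[MeasurableSpace.comap Z inferInstance] K).stronglyMeasurable
    ((show Measurable fun q : ℝ × 𝓩 => q.1 / pt q.2 - (1 - q.1) / (1 - pt q.2) by fun_prop).comp
      hTZ).stronglyMeasurable
    hWi (.of_bound hTm.aestronglyMeasurable 1 hT1) (hKi.mul_bdd hTm.aestronglyMeasurable hT1) hUi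
    (hUi.bdd_mul (by fun_prop) hHε) hprop.symm hU).trans ?_
  exact ae_of_all _ fun ω => dr_regression_eq_add_bias _ _ _ _ _ _

theorem condexp_doubly_robust_label
    {Ω : Type*} [MeasurableSpace Ω] (P : Measure Ω) [IsProbabilityMeasure P]
    {𝓩 : Type*} [MeasurableSpace 𝓩]
    (Y T : Ω → ℝ) (Z : Ω → 𝓩)
    (hYm : Measurable Y) (hTm : Measurable T) (hZm : Measurable Z)
    (hTbin : ∀ ω, T ω = 0 ∨ T ω = 1)
    (g0 g1 p : 𝓩 → ℝ) (hg0m : Measurable g0) (hg1m : Measurable g1) (hpm : Measurable p)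
    (hU : MeasureTheory.condExp
        (MeasurableSpace.comap (fun ω => (T ω, Z ω)) inferInstance) P
        (fun ω => Y ω - (if T ω = 1 then g1 (Z ω) else g0 (Z ω))) =ᵐ[P] 0)
    (hprop : (fun ω => p (Z ω)) =ᵐ[P]
        MeasureTheory.condExp (MeasurableSpace.comap Z inferInstance) P T)
    (hpbd : ∀ᵐ ω ∂P, 0 < p (Z ω) ∧ p (Z ω) < 1)
    (gt0 gt1 pt : 𝓩 → ℝ)
    (hgt0m : Measurable gt0) (hgt1m : Measurable gt1) (hptm : Measurable pt)
    (ε : ℝ) (hε0 : 0 < ε) (hε1 : ε < 1 / 2)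
    (hptbd : ∀ᵐ ω ∂P, ε ≤ pt (Z ω) ∧ pt (Z ω) ≤ 1 - ε)
    (θ : Ω → ℝ) (hθ : θ = fun ω => g1 (Z ω) - g0 (Z ω))
    (Ht : Ω → ℝ) (hHt : Ht = fun ω => T ω / pt (Z ω) - (1 - T ω) / (1 - pt (Z ω)))
    (c : Ω → ℝ)
    (hc : c = fun ω => gt1 (Z ω) - gt0 (Z ω) +
      Ht ω * (Y ω - (if T ω = 1 then gt1 (Z ω) else gt0 (Z ω))))
    (bias1 bias2 : Ω → ℝ)
    (hbias1 : bias1 = fun ω => (p (Z ω) / pt (Z ω) - 1) * (g1 (Z ω) - gt1 (Z ω)))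
    (hbias2 : bias2 = fun ω =>
      (1 - (1 - p (Z ω)) / (1 - pt (Z ω))) * (g0 (Z ω) - gt0 (Z ω)))
    (hYint : Integrable Y P)
    (hg0int : Integrable (fun ω => g0 (Z ω)) P) (hg1int : Integrable (fun ω => g1 (Z ω)) P)
    (hgt0int : Integrable (fun ω => gt0 (Z ω)) P)
    (hgt1int : Integrable (fun ω => gt1 (Z ω)) P)
    :
    MeasureTheory.condExp (MeasurableSpace.comap Z inferInstance) P c =ᵐ[P]
      (fun ω => θ ω + bias1 ω + bias2 ω) :=
  condexp_doubly_robust_label_general P Y T Z hTm hZm hTbin g0 g1 p hg0m hg1m hU hprop gt0 gt1 pt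
    hgt0m hgt1m hptm ε hε0 hptbd θ hθ Ht hHt c hc bias1 bias2 hbias1 hbias2 hYint hg0int hg1int
    hgt0int hgt1int
end

section
/- Under the IRM with ML proxies and square-integrability, the covariance of the doubly robust label with the proxy treatment-effect score decomposes as Cov(c(η̃), θ̃(Z)) = Cov(θ(Z), θ̃(Z)) + Cov(bias₁, θ̃(Z)) + Cov(bias₂, θ̃(Z)). -/
open MeasureTheory ProbabilityTheory Set
open scoped ENNReal

/-!
With `U := Y - g_T(Z)` and `ψ := (g₁ - g̃₁)(Z) / μ̃(Z) + (g₀ - g̃₀)(Z) / (1 - μ̃(Z))`, the doubly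
robust label splits pointwise (as `T ∈ {0, 1}`) into
`c(η̃) = θ(Z) + bias₁ + bias₂ + H̃ U + ψ (T - μ(Z))`.
The last two terms are uncorrelated with every square-integrable function of `Z`, in particular
with `θ̃(Z)`: `H̃` is `σ(T, Z)`-measurable and `E[U | T, Z] = 0`, while `ψ` is `σ(Z)`-measurable
and `E[T - μ(Z) | Z] = 0`. As `μ(Z) ∈ [0, 1]` and `μ̃(Z) ∈ [ε, 1 - ε]`, all five terms are in
`L²`, so the covariance with `θ̃(Z)` is additive over the decomposition.
-/

lemma abs_div_le_inv_of_mem_Icc {a b ε : ℝ} (hε : 0 < ε) (ha : a ∈ Icc 0 1) (hb : ε ≤ b) :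
    |a / b| ≤ ε⁻¹ := by
  rw [abs_of_nonneg (div_nonneg ha.1 (hε.le.trans hb)), ← one_div]
  exact div_le_div₀ zero_le_one ha.2 hε hb

section Lp

variable {α : Type*} {mα : MeasurableSpace α} {μ : Measure α} {a b f g : α → ℝ} {ε : ℝ}

lemma memLp_top_of_ae_mem_Icc (ha : AEStronglyMeasurable a μ) (ha₀₁ : ∀ᵐ x ∂μ, a x ∈ Icc 0 1) :
    MemLp a ∞ μ :=
  memLp_top_of_bound ha 1 <| by
    filter_upwards [ha₀₁] with x hx
    rw [Real.norm_of_nonneg hx.1]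
    exact hx.2

lemma memLp_top_div_of_le (ha : AEStronglyMeasurable a μ) (hb : AEStronglyMeasurable b μ)
    (hε : 0 < ε) (ha₀₁ : ∀ᵐ x ∂μ, a x ∈ Icc 0 1) (hb_ge : ∀ᵐ x ∂μ, ε ≤ b x) :
    MemLp (fun x ↦ a x / b x) ∞ μ :=
  memLp_top_of_bound (ha.div₀ hb) ε⁻¹ <| by
    filter_upwards [ha₀₁, hb_ge] with x hax hbx
    exact abs_div_le_inv_of_mem_Icc hε hax hbx

lemma MeasureTheory.MemLp.div_of_le {p : ℝ≥0∞} (hf : MemLp f p μ) (hg : AEStronglyMeasurable g μ)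
    (hε : 0 < ε) (hg_ge : ∀ᵐ x ∂μ, ε ≤ g x) : MemLp (fun x ↦ f x / g x) p μ :=
  hf.of_le_mul (c := ε⁻¹) (hf.1.div₀ hg) <| by
    filter_upwards [hg_ge] with x hx
    rw [norm_div, Real.norm_of_nonneg (hε.le.trans hx), div_eq_inv_mul]
    gcongr

end Lp

section Orthogonality

variable {Ω : Type*} {m mΩ : MeasurableSpace Ω} {P : Measure Ω} {U V W : Ω → ℝ}

lemma integral_mul_eq_zero_of_condExp_ae_eq_zero (hm : m ≤ mΩ) [SigmaFinite (P.trim hm)]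
    (hW : AEStronglyMeasurable[m] W P) (hWU : Integrable (W * U) P) (hU : Integrable U P)
    (hU₀ : P[U|m] =ᵐ[P] 0) : ∫ ω, (W * U) ω ∂P = 0 := by
  rw [← integral_condExp hm]
  refine integral_eq_zero_of_ae ((condExp_mul_of_aestronglyMeasurable_left hW hWU hU).trans ?_)
  filter_upwards [hU₀] with ω hω
  simp [hω]

lemma covariance_mul_eq_zero_of_condExp_ae_eq_zero [IsProbabilityMeasure P] (hm : m ≤ mΩ)
    (hW : AEStronglyMeasurable[m] W P) (hV : AEStronglyMeasurable[m] V P)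
    (hWU : MemLp (W * U) 2 P) (hV₂ : MemLp V 2 P) (hU : Integrable U P)
    (hU₀ : P[U|m] =ᵐ[P] 0) : cov[W * U, V; P] = 0 := by
  have hWUV : W * U * V = W * V * U := by ring
  have h₁ := integral_mul_eq_zero_of_condExp_ae_eq_zero hm hW (hWU.integrable one_le_two) hU hU₀
  have h₂ := integral_mul_eq_zero_of_condExp_ae_eq_zero hm (hW.mul hV)
    (hWUV ▸ hWU.integrable_mul hV₂) hU hU₀
  rw [covariance_eq_sub hWU hV₂, hWUV, h₁, h₂, zero_mul, sub_zero]

lemma condExp_sub_ae_eq_zero_of_ae_eq_condExp (hm : m ≤ mΩ) [SigmaFinite (P.trim hm)]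
    (hU : Integrable U P) (hV : StronglyMeasurable[m] V) (hVU : V =ᵐ[P] P[U|m]) :
    P[U - V|m] =ᵐ[P] 0 := by
  have hV_int : Integrable V P := integrable_condExp.congr hVU.symm
  filter_upwards [condExp_sub hU hV_int m, hVU] with ω h hω
  rw [h, condExp_of_stronglyMeasurable hm hV hV_int, Pi.sub_apply, ← hω, sub_self, Pi.zero_apply]

lemma covariance_comp_mul_eq_zero_of_condExp_comap_ae_eq_zero [IsProbabilityMeasure P]
    {β : Type*} [MeasurableSpace β] {X : Ω → β} {w v : β → ℝ} (hX : Measurable X)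
    (hw : Measurable w) (hv : Measurable v) (hWU : MemLp ((fun ω ↦ w (X ω)) * U) 2 P)
    (hV₂ : MemLp (fun ω ↦ v (X ω)) 2 P) (hU : Integrable U P)
    (hU₀ : P[U|MeasurableSpace.comap X inferInstance] =ᵐ[P] 0) :
    cov[(fun ω ↦ w (X ω)) * U, fun ω ↦ v (X ω); P] = 0 :=
  covariance_mul_eq_zero_of_condExp_ae_eq_zero hX.comap_le
    (hw.comp (comap_measurable X)).aestronglyMeasurable
    (hv.comp (comap_measurable X)).aestronglyMeasurable hWU hV₂ hU hU₀

end Orthogonality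

section PropensityWeights

variable {Ω : Type*} {mΩ : MeasurableSpace Ω} {P : Measure Ω} {t q q' f₀ f₁ : Ω → ℝ} {ε : ℝ}

lemma ae_one_sub_mem_Icc (ht : ∀ᵐ ω ∂P, t ω ∈ Icc 0 1) : ∀ᵐ ω ∂P, 1 - t ω ∈ Icc 0 1 := by
  filter_upwards [ht] with ω h using ⟨by linarith [h.2], by linarith [h.1]⟩

lemma ae_le_one_sub_of_ae_mem_Icc (hq'ε : ∀ᵐ ω ∂P, q' ω ∈ Icc ε (1 - ε)) :
    ∀ᵐ ω ∂P, ε ≤ 1 - q' ω := by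
  filter_upwards [hq'ε] with ω h using by linarith [h.2]

lemma memLp_top_inversePropensityWeight (hε : 0 < ε) (ht : AEStronglyMeasurable t P)
    (hq' : AEStronglyMeasurable q' P) (ht₀₁ : ∀ᵐ ω ∂P, t ω ∈ Icc 0 1)
    (hq'ε : ∀ᵐ ω ∂P, q' ω ∈ Icc ε (1 - ε)) :
    MemLp (fun ω ↦ t ω / q' ω - (1 - t ω) / (1 - q' ω)) ∞ P :=
  (memLp_top_div_of_le ht hq' hε ht₀₁ (hq'ε.mono fun _ h ↦ h.1)).sub
    (memLp_top_div_of_le (aestronglyMeasurable_const.sub ht) (aestronglyMeasurable_const.sub hq')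
      hε (ae_one_sub_mem_Icc ht₀₁) (ae_le_one_sub_of_ae_mem_Icc hq'ε))

lemma MeasureTheory.MemLp.div_add_div_one_sub {p : ℝ≥0∞} (hf₁ : MemLp f₁ p P)
    (hf₀ : MemLp f₀ p P) (hε : 0 < ε) (hq' : AEStronglyMeasurable q' P)
    (hq'ε : ∀ᵐ ω ∂P, q' ω ∈ Icc ε (1 - ε)) :
    MemLp (fun ω ↦ f₁ ω / q' ω + f₀ ω / (1 - q' ω)) p P :=
  (hf₁.div_of_le hq' hε (hq'ε.mono fun _ h ↦ h.1)).add
    (hf₀.div_of_le (aestronglyMeasurable_const.sub hq') hε (ae_le_one_sub_of_ae_mem_Icc hq'ε))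

lemma MeasureTheory.MemLp.div_sub_one_mul [IsFiniteMeasure P] {p : ℝ≥0∞} (hf : MemLp f₁ p P)
    (hε : 0 < ε) (hq : AEStronglyMeasurable q P) (hq' : AEStronglyMeasurable q' P)
    (hq₀₁ : ∀ᵐ ω ∂P, q ω ∈ Icc 0 1) (hq'ε : ∀ᵐ ω ∂P, q' ω ∈ Icc ε (1 - ε)) :
    MemLp (fun ω ↦ (q ω / q' ω - 1) * f₁ ω) p P :=
  hf.mul ((memLp_top_div_of_le hq hq' hε hq₀₁ (hq'ε.mono fun _ h ↦ h.1)).sub (memLp_const 1))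

lemma MeasureTheory.MemLp.one_sub_div_one_sub_mul [IsFiniteMeasure P]
    {p : ℝ≥0∞} (hf : MemLp f₀ p P) (hε : 0 < ε)
    (hq : AEStronglyMeasurable q P) (hq' : AEStronglyMeasurable q' P)
    (hq₀₁ : ∀ᵐ ω ∂P, q ω ∈ Icc 0 1) (hq'ε : ∀ᵐ ω ∂P, q' ω ∈ Icc ε (1 - ε)) :
    MemLp (fun ω ↦ (1 - (1 - q ω) / (1 - q' ω)) * f₀ ω) p P :=
  hf.mul ((memLp_const 1).sub (memLp_top_div_of_le (aestronglyMeasurable_const.sub hq)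
    (aestronglyMeasurable_const.sub hq') hε (ae_one_sub_mem_Icc hq₀₁)
    (ae_le_one_sub_of_ae_mem_Icc hq'ε)))

end PropensityWeights

lemma doublyRobustLabel_eq {t y g₀ g₁ g₀' g₁' p p' : ℝ} (ht : t = 0 ∨ t = 1) :
    g₁' - g₀' + (t / p' - (1 - t) / (1 - p')) * (y - if t = 1 then g₁' else g₀') =
      g₁ - g₀ + (p / p' - 1) * (g₁ - g₁') + (1 - (1 - p) / (1 - p')) * (g₀ - g₀')
        + (t / p' - (1 - t) / (1 - p')) * (y - if t = 1 then g₁ else g₀)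
        + ((g₁ - g₁') / p' + (g₀ - g₀') / (1 - p')) * (t - p) := by
  rcases ht with rfl | rfl <;> simp <;> ring

theorem covariance_doubly_robust_label_decomposition_general
    {Ω : Type*} [MeasurableSpace Ω] (P : Measure Ω) [IsProbabilityMeasure P]
    {𝓩 : Type*} [MeasurableSpace 𝓩]
    (Y T : Ω → ℝ) (Z : Ω → 𝓩)
    (hTm : Measurable T) (hZm : Measurable Z)
    (hTbin : ∀ ω, T ω = 0 ∨ T ω = 1)
    (g0 g1 p : 𝓩 → ℝ) (hg0m : Measurable g0) (hg1m : Measurable g1) (hpm : Measurable p)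
    (hU : MeasureTheory.condExp
        (MeasurableSpace.comap (fun ω => (T ω, Z ω)) inferInstance) P
        (fun ω => Y ω - (if T ω = 1 then g1 (Z ω) else g0 (Z ω))) =ᵐ[P] 0)
    (hprop : (fun ω => p (Z ω)) =ᵐ[P]
        MeasureTheory.condExp (MeasurableSpace.comap Z inferInstance) P T)
    (hpbd : ∀ᵐ ω ∂P, 0 < p (Z ω) ∧ p (Z ω) < 1)
    (gt0 gt1 pt : 𝓩 → ℝ)
    (hgt0m : Measurable gt0) (hgt1m : Measurable gt1) (hptm : Measurable pt)
    (ε : ℝ) (hε0 : 0 < ε)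
    (hptbd : ∀ᵐ ω ∂P, ε ≤ pt (Z ω) ∧ pt (Z ω) ≤ 1 - ε)
    (θ : Ω → ℝ) (hθ : θ = fun ω => g1 (Z ω) - g0 (Z ω))
    (θt : Ω → ℝ) (hθt : θt = fun ω => gt1 (Z ω) - gt0 (Z ω))
    (Ht : Ω → ℝ) (hHt : Ht = fun ω => T ω / pt (Z ω) - (1 - T ω) / (1 - pt (Z ω)))
    (c : Ω → ℝ)
    (hc : c = fun ω => gt1 (Z ω) - gt0 (Z ω) +
      Ht ω * (Y ω - (if T ω = 1 then gt1 (Z ω) else gt0 (Z ω))))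
    (bias1 bias2 : Ω → ℝ)
    (hbias1 : bias1 = fun ω => (p (Z ω) / pt (Z ω) - 1) * (g1 (Z ω) - gt1 (Z ω)))
    (hbias2 : bias2 = fun ω =>
      (1 - (1 - p (Z ω)) / (1 - pt (Z ω))) * (g0 (Z ω) - gt0 (Z ω)))
    (cov : (Ω → ℝ) → (Ω → ℝ) → ℝ)
    (hcov : ∀ f g : Ω → ℝ, cov f g =
      ∫ ω, (f ω - ∫ m, f m ∂P) * (g ω - ∫ m, g m ∂P) ∂P)
    (hY2 : MemLp Y 2 P)
    (hg02 : MemLp (fun ω => g0 (Z ω)) 2 P) (hg12 : MemLp (fun ω => g1 (Z ω)) 2 P)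
    (hgt02 : MemLp (fun ω => gt0 (Z ω)) 2 P) (hgt12 : MemLp (fun ω => gt1 (Z ω)) 2 P)
    :
    cov c θt = cov θ θt + cov bias1 θt + cov bias2 θt := by
  set U := fun ω ↦ Y ω - (if T ω = 1 then g1 (Z ω) else g0 (Z ω))
  set ψ := fun ω ↦ (g1 (Z ω) - gt1 (Z ω)) / pt (Z ω) + (g0 (Z ω) - gt0 (Z ω)) / (1 - pt (Z ω))
  have hdecomp : c = θ + bias1 + bias2 + Ht * U + ψ * (T - fun ω ↦ p (Z ω)) := by
    subst hc hθ hbias1 hbias2 hHt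
    exact funext fun ω ↦ doublyRobustLabel_eq (hTbin ω)
  have hT01 : ∀ᵐ ω ∂P, T ω ∈ Icc 0 1 := .of_forall fun ω ↦ by
    rcases hTbin ω with h | h <;> simp [h]
  have hp01 : ∀ᵐ ω ∂P, p (Z ω) ∈ Icc 0 1 := by
    filter_upwards [hpbd] with ω h using ⟨h.1.le, h.2.le⟩
  have hq : AEStronglyMeasurable (fun ω ↦ p (Z ω)) P := (hpm.comp hZm).aestronglyMeasurable
  have hq' : AEStronglyMeasurable (fun ω ↦ pt (Z ω)) P := (hptm.comp hZm).aestronglyMeasurable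
  have hθt2 : MemLp θt 2 P := hθt ▸ hgt12.sub hgt02
  have hU2 : MemLp U 2 P := hY2.sub <| MemLp.piecewise (s := {ω | T ω = 1})
    (hTm (measurableSet_singleton 1)) (hg12.restrict _) (hg02.restrict _)
  have hT : MemLp T ∞ P := memLp_top_of_ae_mem_Icc hTm.aestronglyMeasurable hT01
  have hTp : MemLp (T - fun ω ↦ p (Z ω)) ∞ P := hT.sub (memLp_top_of_ae_mem_Icc hq hp01)
  have hHtU : MemLp (Ht * U) 2 P := hU2.mul <|
    hHt ▸ memLp_top_inversePropensityWeight hε0 hTm.aestronglyMeasurable hq' hT01 hptbd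
  have hψT : MemLp (ψ * (T - fun ω ↦ p (Z ω))) 2 P :=
    hTp.mul ((hg12.sub hgt12).div_add_div_one_sub (hg02.sub hgt02) hε0 hq' hptbd)
  have horth₁ : cov[Ht * U, θt; P] = 0 := by
    subst hHt hθt
    exact covariance_comp_mul_eq_zero_of_condExp_comap_ae_eq_zero (hTm.prodMk hZm)
      (w := fun x ↦ x.1 / pt x.2 - (1 - x.1) / (1 - pt x.2)) (v := fun x ↦ gt1 x.2 - gt0 x.2)
      (by fun_prop) (by fun_prop) hHtU hθt2 (hU2.integrable one_le_two) hU
  have horth₂ : cov[ψ * (T - fun ω ↦ p (Z ω)), θt; P] = 0 := by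
    subst hθt
    exact covariance_comp_mul_eq_zero_of_condExp_comap_ae_eq_zero hZm
      (w := fun z ↦ (g1 z - gt1 z) / pt z + (g0 z - gt0 z) / (1 - pt z))
      (v := fun z ↦ gt1 z - gt0 z) (by fun_prop) (by fun_prop) hψT hθt2 (hTp.integrable le_top)
      (condExp_sub_ae_eq_zero_of_ae_eq_condExp hZm.comap_le (hT.integrable le_top)
        (hpm.comp (comap_measurable Z)).stronglyMeasurable hprop)
  have hθ2 : MemLp θ 2 P := hθ ▸ hg12.sub hg02
  have hb₁ : MemLp bias1 2 P := hbias1 ▸ (hg12.sub hgt12).div_sub_one_mul hε0 hq hq' hp01 hptbd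
  have hb₂ : MemLp bias2 2 P :=
    hbias2 ▸ (hg02.sub hgt02).one_sub_div_one_sub_mul hε0 hq hq' hp01 hptbd
  simp only [show cov = fun f g ↦ cov[f, g; P] from funext₂ hcov, hdecomp]
  rw [covariance_add_left (((hθ2.add hb₁).add hb₂).add hHtU) hψT hθt2,
    covariance_add_left ((hθ2.add hb₁).add hb₂) hHtU hθt2,
    covariance_add_left (hθ2.add hb₁) hb₂ hθt2, covariance_add_left hθ2 hb₁ hθt2,
    horth₁, horth₂, add_zero, add_zero]

theorem covariance_doubly_robust_label_decomposition
    {Ω : Type*} [MeasurableSpace Ω] (P : Measure Ω) [IsProbabilityMeasure P]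
    {𝓩 : Type*} [MeasurableSpace 𝓩]
    (Y T : Ω → ℝ) (Z : Ω → 𝓩)
    (hYm : Measurable Y) (hTm : Measurable T) (hZm : Measurable Z)
    (hTbin : ∀ ω, T ω = 0 ∨ T ω = 1)
    (g0 g1 p : 𝓩 → ℝ) (hg0m : Measurable g0) (hg1m : Measurable g1) (hpm : Measurable p)
    (hU : MeasureTheory.condExp
        (MeasurableSpace.comap (fun ω => (T ω, Z ω)) inferInstance) P
        (fun ω => Y ω - (if T ω = 1 then g1 (Z ω) else g0 (Z ω))) =ᵐ[P] 0)
    (hprop : (fun ω => p (Z ω)) =ᵐ[P]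
        MeasureTheory.condExp (MeasurableSpace.comap Z inferInstance) P T)
    (hpbd : ∀ᵐ ω ∂P, 0 < p (Z ω) ∧ p (Z ω) < 1)
    (gt0 gt1 pt : 𝓩 → ℝ)
    (hgt0m : Measurable gt0) (hgt1m : Measurable gt1) (hptm : Measurable pt)
    (ε : ℝ) (hε0 : 0 < ε) (hε1 : ε < 1 / 2)
    (hptbd : ∀ᵐ ω ∂P, ε ≤ pt (Z ω) ∧ pt (Z ω) ≤ 1 - ε)
    (θ : Ω → ℝ) (hθ : θ = fun ω => g1 (Z ω) - g0 (Z ω))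
    (θt : Ω → ℝ) (hθt : θt = fun ω => gt1 (Z ω) - gt0 (Z ω))
    (Ht : Ω → ℝ) (hHt : Ht = fun ω => T ω / pt (Z ω) - (1 - T ω) / (1 - pt (Z ω)))
    (c : Ω → ℝ)
    (hc : c = fun ω => gt1 (Z ω) - gt0 (Z ω) +
      Ht ω * (Y ω - (if T ω = 1 then gt1 (Z ω) else gt0 (Z ω))))
    (bias1 bias2 : Ω → ℝ)
    (hbias1 : bias1 = fun ω => (p (Z ω) / pt (Z ω) - 1) * (g1 (Z ω) - gt1 (Z ω)))
    (hbias2 : bias2 = fun ω =>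
      (1 - (1 - p (Z ω)) / (1 - pt (Z ω))) * (g0 (Z ω) - gt0 (Z ω)))
    (cov : (Ω → ℝ) → (Ω → ℝ) → ℝ)
    (hcov : ∀ f g : Ω → ℝ, cov f g =
      ∫ ω, (f ω - ∫ m, f m ∂P) * (g ω - ∫ m, g m ∂P) ∂P)
    (hY2 : MemLp Y 2 P)
    (hg02 : MemLp (fun ω => g0 (Z ω)) 2 P) (hg12 : MemLp (fun ω => g1 (Z ω)) 2 P)
    (hgt02 : MemLp (fun ω => gt0 (Z ω)) 2 P) (hgt12 : MemLp (fun ω => gt1 (Z ω)) 2 P)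
    :
    cov c θt = cov θ θt + cov bias1 θt + cov bias2 θt :=
  covariance_doubly_robust_label_decomposition_general P Y T Z hTm hZm hTbin g0 g1 p hg0m hg1m hpm
    hU hprop hpbd gt0 gt1 pt hgt0m hgt1m hptm ε hε0 hptbd θ hθ θt hθt Ht hHt c hc bias1 bias2 hbias1
    hbias2 cov hcov hY2 hg02 hg12 hgt02 hgt12
end

section
/- (Double robustness in the propensity score.) Under the IRM with ML proxies, if additionally μ̃(Z) = μ(Z) almost surely, then bias₁ = 0 and bias₂ = 0 almost surely, and consequently the linear-projection coefficients of c(η̃) on (1, θ̃(Z) − E[θ̃(Z)]) equal (a₁, b₁) = (E[θ(Z)], Cov(θ(Z), θ̃(Z))/Var(θ̃(Z))), i.e., the coefficients of the best linear predictor of θ(Z) by θ̃(Z). -/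
open MeasureTheory ProbabilityTheory

/-! For binary `T` the doubly robust label splits as `c = A(Z) + H̃ U + χ(Z) T` with `A, χ` built
from the nuisance functions, where `U = Y - g_T(Z)` has conditional mean zero given `(T, Z)` and
`E[T | Z] = μ(Z)`. Hence `E[c | Z] = θ(Z) + bias₁ + bias₂`, and both biases vanish when `μ̃ = μ`.
The normal equations see `c` only through `E[c]` and `Cov(c, θ̃(Z))`, and since `θ̃(Z)` is
`σ(Z)`-measurable these agree with the corresponding moments of `E[c | Z] = θ(Z)`. -/

section ConditionalExpectation

variable {Ω : Type*} {m m₀ : MeasurableSpace Ω} {μ : Measure Ω} [IsFiniteMeasure μ]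

theorem integral_mul_eq_of_condExp_ae_eq (hm : m ≤ m₀) {W U V : Ω → ℝ}
    (hW : StronglyMeasurable[m] W) (hWU : Integrable (W * U) μ) (hU : Integrable U μ)
    (hUV : μ[U | m] =ᵐ[μ] V) : ∫ ω, W ω * U ω ∂μ = ∫ ω, W ω * V ω ∂μ := by
  rw [← integral_condExp hm]
  refine integral_congr_ae ?_
  filter_upwards [condExp_mul_of_stronglyMeasurable_left hW hWU hU, hUV] with ω hWU' hUV'
  rw [← hUV']
  exact hWU'

theorem condExp_mul_eq_zero_of_condExp_eq_zero_s5 {m' : MeasurableSpace Ω} (hmm' : m ≤ m')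
    (hm' : m' ≤ m₀) {W U : Ω → ℝ} (hW : StronglyMeasurable[m'] W) (hWU : Integrable (W * U) μ)
    (hU : Integrable U μ) (hU₀ : μ[U | m'] =ᵐ[μ] 0) : μ[W * U | m] =ᵐ[μ] 0 := by
  have hWU₀ : μ[W * U | m'] =ᵐ[μ] 0 := by
    filter_upwards [condExp_mul_of_stronglyMeasurable_left hW hWU hU, hU₀] with ω h h₀
    simp [h, h₀]
  calc μ[W * U | m] =ᵐ[μ] μ[μ[W * U | m'] | m] := (condExp_condExp_of_le hmm' hm').symm
    _ =ᵐ[μ] μ[0 | m] := condExp_congr_ae hWU₀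
    _ = 0 := condExp_zero

theorem condExp_add_mul_add_mul_ae_eq {m' : MeasurableSpace Ω} (hmm' : m ≤ m') (hm' : m' ≤ m₀)
    {A H U χ T q : Ω → ℝ} (hAm : StronglyMeasurable[m] A) (hHm : StronglyMeasurable[m'] H)
    (hχm : StronglyMeasurable[m] χ) (hA : Integrable A μ) (hHU : Integrable (H * U) μ)
    (hU : Integrable U μ) (hχT : Integrable (χ * T) μ) (hT : Integrable T μ)
    (hU₀ : μ[U | m'] =ᵐ[μ] 0) (hTq : μ[T | m] =ᵐ[μ] q) :
    μ[A + H * U + χ * T | m] =ᵐ[μ] A + χ * q := by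
  have hm : m ≤ m₀ := hmm'.trans hm'
  filter_upwards [condExp_add (hA.add hHU) hχT m, condExp_add hA hHU m,
    condExp_mul_eq_zero_of_condExp_eq_zero_s5 hmm' hm' hHm hHU hU hU₀,
    condExp_mul_of_stronglyMeasurable_left hχm hχT hT, hTq] with ω h₁ h₂ h₃ h₄ h₅
  simp only [h₁, Pi.add_apply, h₂, condExp_of_stronglyMeasurable hm hAm hA, h₃, h₄, Pi.mul_apply,
    h₅, Pi.zero_apply, add_zero]

theorem covariance_eq_of_condExp_ae_eq [IsProbabilityMeasure μ] (hm : m ≤ m₀) {C θ X : Ω → ℝ}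
    (hC : MemLp C 2 μ) (hθ : MemLp θ 2 μ) (hX : MemLp X 2 μ) (hXm : StronglyMeasurable[m] X)
    (hCθ : μ[C | m] =ᵐ[μ] θ) : cov[C, X; μ] = cov[θ, X; μ] := by
  have hmean : ∫ ω, C ω ∂μ = ∫ ω, θ ω ∂μ :=
    (integral_condExp hm).symm.trans (integral_congr_ae hCθ)
  have hprod : ∫ ω, X ω * C ω ∂μ = ∫ ω, X ω * θ ω ∂μ :=
    integral_mul_eq_of_condExp_ae_eq hm hXm (hX.integrable_mul hC) (hC.integrable one_le_two) hCθ
  rw [covariance_eq_sub hC hX, covariance_eq_sub hθ hX, hmean]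
  simp only [Pi.mul_apply, mul_comm (C _), mul_comm (θ _), hprod]

end ConditionalExpectation

theorem eq_of_normal_equations {Ω : Type*} {m₀ : MeasurableSpace Ω} {μ : Measure Ω}
    [IsProbabilityMeasure μ] {C X : Ω → ℝ} (hC : MemLp C 2 μ) (hX : MemLp X 2 μ)
    (hvar : cov[X, X; μ] ≠ 0) {a b : ℝ}
    (h₁ : ∫ ω, (C ω - a - b * (X ω - ∫ x, X x ∂μ)) ∂μ = 0)
    (h₂ : ∫ ω, (C ω - a - b * (X ω - ∫ x, X x ∂μ)) * (X ω - ∫ x, X x ∂μ) ∂μ = 0) :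
    a = ∫ ω, C ω ∂μ ∧ b = cov[C, X; μ] / cov[X, X; μ] := by
  have hC₁ : Integrable C μ := hC.integrable one_le_two
  have hX' : MemLp (fun ω => X ω - ∫ x, X x ∂μ) 2 μ := hX.sub (memLp_const _)
  have hX'₀ : ∫ ω, (X ω - ∫ x, X x ∂μ) ∂μ = 0 := by
    rw [integral_sub (hX.integrable one_le_two) (integrable_const _)]; simp
  have ha : a = ∫ ω, C ω ∂μ := by
    rw [integral_sub (f := fun ω => C ω - a) (hC₁.sub (integrable_const a))
      ((hX'.integrable one_le_two).const_mul b), integral_sub hC₁ (integrable_const a),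
      integral_const_mul, hX'₀] at h₁
    simp only [integral_const, probReal_univ, one_smul, mul_zero, sub_zero] at h₁
    linarith
  subst ha
  refine ⟨rfl, (eq_div_iff hvar).mpr ?_⟩
  have hC' : MemLp (fun ω => C ω - ∫ x, C x ∂μ) 2 μ := hC.sub (memLp_const _)
  have hsplit : ∫ ω, (C ω - ∫ x, C x ∂μ - b * (X ω - ∫ x, X x ∂μ)) * (X ω - ∫ x, X x ∂μ) ∂μ
      = cov[C, X; μ] - b * cov[X, X; μ] := by
    rw [covariance, covariance, ← integral_const_mul, ← integral_sub]
    · exact integral_congr_ae (.of_forall fun ω => by ring)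
    · exact hC'.integrable_mul hX'
    · exact (hX'.integrable_mul hX').const_mul b
  linarith

theorem memLp_top_inv_of_ae_le {α : Type*} {_ : MeasurableSpace α} {μ : Measure α}
    {g : α → ℝ} {ε : ℝ} (hg : AEMeasurable g μ) (hε : 0 < ε) (h : ∀ᵐ x ∂μ, ε ≤ g x) :
    MemLp (fun x => (g x)⁻¹) ⊤ μ :=
  memLp_top_of_bound hg.inv.aestronglyMeasurable ε⁻¹ <| h.mono fun x hx => by
    rw [norm_inv, Real.norm_of_nonneg (hε.le.trans hx)]
    exact inv_anti₀ hε hx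

section Binary

variable {Ω : Type*} {mΩ : MeasurableSpace Ω} {μ : Measure Ω} {T : Ω → ℝ}

theorem memLp_top_of_forall_eq_zero_or_eq_one (hT : AEStronglyMeasurable T μ)
    (hbin : ∀ ω, T ω = 0 ∨ T ω = 1) : MemLp T ⊤ μ :=
  memLp_top_of_bound hT 1 (.of_forall fun ω => by rcases hbin ω with h | h <;> simp [h])

theorem memLp_ite_eq_one {p : ENNReal} {f g : Ω → ℝ} (hbin : ∀ ω, T ω = 0 ∨ T ω = 1)
    (hT : MemLp T ⊤ μ) (hf : MemLp f p μ) (hg : MemLp g p μ) :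
    MemLp (fun ω => if T ω = 1 then f ω else g ω) p μ := by
  have hsel : (fun ω => if T ω = 1 then f ω else g ω) =
      fun ω => T ω * f ω + (g ω - T ω * g ω) :=
    funext fun ω => by rcases hbin ω with h | h <;> simp [h]
  rw [hsel]
  exact (hf.mul' hT).add (hg.sub (hg.mul' hT))

end Binary

section InteractiveRegression

variable {Ω 𝓩 : Type*} {mΩ : MeasurableSpace Ω} [MeasurableSpace 𝓩] {P : Measure Ω}
  {Y T : Ω → ℝ} {Z : Ω → 𝓩}

-- `H̃` and `c(η̃)`, with `g̃₀, g̃₁, μ̃` written `gt0, gt1, pt`.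
noncomputable def ipwWeight (T : Ω → ℝ) (Z : Ω → 𝓩) (pt : 𝓩 → ℝ) (ω : Ω) : ℝ :=
  T ω / pt (Z ω) - (1 - T ω) / (1 - pt (Z ω))

noncomputable def drLabel (Y T : Ω → ℝ) (Z : Ω → 𝓩) (gt0 gt1 pt : 𝓩 → ℝ) (ω : Ω) : ℝ :=
  gt1 (Z ω) - gt0 (Z ω) + ipwWeight T Z pt ω * (Y ω - if T ω = 1 then gt1 (Z ω) else gt0 (Z ω))

theorem memLp_top_inv_propensity (hZm : Measurable Z) {pt : 𝓩 → ℝ} (hptm : Measurable pt)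
    {ε : ℝ} (hε : 0 < ε) (hptbd : ∀ᵐ ω ∂P, ε ≤ pt (Z ω) ∧ pt (Z ω) ≤ 1 - ε) :
    MemLp (fun ω => (pt (Z ω))⁻¹) ⊤ P ∧ MemLp (fun ω => (1 - pt (Z ω))⁻¹) ⊤ P :=
  ⟨memLp_top_inv_of_ae_le (hptm.comp hZm).aemeasurable hε (hptbd.mono fun _ h => h.1),
    memLp_top_inv_of_ae_le ((hptm.comp hZm).const_sub 1).aemeasurable hε
      (hptbd.mono fun _ h => by linarith [h.2])⟩

theorem memLp_top_ipwWeight [IsFiniteMeasure P] (hT : MemLp T ⊤ P) (hZm : Measurable Z)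
    {pt : 𝓩 → ℝ} (hptm : Measurable pt) {ε : ℝ} (hε : 0 < ε)
    (hptbd : ∀ᵐ ω ∂P, ε ≤ pt (Z ω) ∧ pt (Z ω) ≤ 1 - ε) : MemLp (ipwWeight T Z pt) ⊤ P := by
  obtain ⟨hinv, hinv'⟩ := memLp_top_inv_propensity hZm hptm hε hptbd
  have hH : MemLp (fun ω => T ω * (pt (Z ω))⁻¹ - (1 - T ω) * (1 - pt (Z ω))⁻¹) ⊤ P :=
    (hinv.mul' hT).sub (hinv'.mul' ((memLp_const 1).sub hT))
  simp only [← div_eq_mul_inv] at hH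
  exact hH

theorem memLp_drLabel [IsFiniteMeasure P] (hTm : Measurable T) (hZm : Measurable Z)
    (hTbin : ∀ ω, T ω = 0 ∨ T ω = 1) {gt0 gt1 pt : 𝓩 → ℝ} (hptm : Measurable pt) {ε : ℝ}
    (hε : 0 < ε) (hptbd : ∀ᵐ ω ∂P, ε ≤ pt (Z ω) ∧ pt (Z ω) ≤ 1 - ε) (hY2 : MemLp Y 2 P)
    (hgt02 : MemLp (fun ω => gt0 (Z ω)) 2 P) (hgt12 : MemLp (fun ω => gt1 (Z ω)) 2 P) :
    MemLp (drLabel Y T Z gt0 gt1 pt) 2 P := by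
  have hT : MemLp T ⊤ P := memLp_top_of_forall_eq_zero_or_eq_one hTm.aestronglyMeasurable hTbin
  exact (hgt12.sub hgt02).add ((hY2.sub (memLp_ite_eq_one hTbin hT hgt12 hgt02)).mul
    (memLp_top_ipwWeight hT hZm hptm hε hptbd))

theorem condExp_drLabel_ae_eq [IsFiniteMeasure P] (hTm : Measurable T) (hZm : Measurable Z)
    (hTbin : ∀ ω, T ω = 0 ∨ T ω = 1) {g0 g1 p gt0 gt1 pt : 𝓩 → ℝ}
    (hg0m : Measurable g0) (hg1m : Measurable g1) (hgt0m : Measurable gt0)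
    (hgt1m : Measurable gt1) (hptm : Measurable pt)
    (hU : P[fun ω => Y ω - (if T ω = 1 then g1 (Z ω) else g0 (Z ω)) |
      MeasurableSpace.comap (fun ω => (T ω, Z ω)) inferInstance] =ᵐ[P] 0)
    (hprop : (fun ω => p (Z ω)) =ᵐ[P] P[T | MeasurableSpace.comap Z inferInstance])
    {ε : ℝ} (hε : 0 < ε) (hptbd : ∀ᵐ ω ∂P, ε ≤ pt (Z ω) ∧ pt (Z ω) ≤ 1 - ε)
    (hY2 : MemLp Y 2 P) (hg02 : MemLp (fun ω => g0 (Z ω)) 2 P)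
    (hg12 : MemLp (fun ω => g1 (Z ω)) 2 P) (hgt02 : MemLp (fun ω => gt0 (Z ω)) 2 P)
    (hgt12 : MemLp (fun ω => gt1 (Z ω)) 2 P) :
    P[drLabel Y T Z gt0 gt1 pt | MeasurableSpace.comap Z inferInstance] =ᵐ[P] fun ω =>
      g1 (Z ω) - g0 (Z ω) + (p (Z ω) / pt (Z ω) - 1) * (g1 (Z ω) - gt1 (Z ω)) +
        (1 - (1 - p (Z ω)) / (1 - pt (Z ω))) * (g0 (Z ω) - gt0 (Z ω)) := by
  have hT : MemLp T ⊤ P := memLp_top_of_forall_eq_zero_or_eq_one hTm.aestronglyMeasurable hTbin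
  obtain ⟨hinv, hinv'⟩ := memLp_top_inv_propensity hZm hptm hε hptbd
  set ψ0 : 𝓩 → ℝ := fun z => (1 - pt z)⁻¹ * (g0 z - gt0 z)
  set ψ1 : 𝓩 → ℝ := fun z => (pt z)⁻¹ * (g1 z - gt1 z)
  set U : Ω → ℝ := fun ω => Y ω - if T ω = 1 then g1 (Z ω) else g0 (Z ω)
  have hdecomp : drLabel Y T Z gt0 gt1 pt = (fun ω => gt1 (Z ω) - gt0 (Z ω) - ψ0 (Z ω)) +
      ipwWeight T Z pt * U + (fun ω => ψ0 (Z ω) + ψ1 (Z ω)) * T := by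
    funext ω
    rcases hTbin ω with h | h <;>
      simp only [drLabel, ipwWeight, U, ψ0, ψ1, Pi.add_apply, Pi.mul_apply, h, zero_ne_one,
        ↓reduceIte] <;> ring
  have hψ0 : MemLp (fun ω => ψ0 (Z ω)) 2 P := (hg02.sub hgt02).mul' hinv'
  have hψ1 : MemLp (fun ω => ψ1 (Z ω)) 2 P := (hg12.sub hgt12).mul' hinv
  have hU2 : MemLp U 2 P := hY2.sub (memLp_ite_eq_one hTbin hT hg12 hg02)
  have hHU := (hU2.mul (memLp_top_ipwWeight hT hZm hptm hε hptbd)).integrable one_le_two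
  have hmZ : MeasurableSpace.comap Z inferInstance ≤
      MeasurableSpace.comap (fun ω => (T ω, Z ω)) inferInstance :=
    Measurable.comap_le (f := Z) (measurable_snd.comp (comap_measurable (fun ω => (T ω, Z ω))))
  have hHm : StronglyMeasurable[MeasurableSpace.comap (fun ω => (T ω, Z ω)) inferInstance]
      (ipwWeight T Z pt) :=
    ((show Measurable fun q : ℝ × 𝓩 => q.1 / pt q.2 - (1 - q.1) / (1 - pt q.2) by
      fun_prop).comp (comap_measurable (fun ω => (T ω, Z ω)))).stronglyMeasurable
  have hAm : StronglyMeasurable[MeasurableSpace.comap Z inferInstance]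
      (fun ω => gt1 (Z ω) - gt0 (Z ω) - ψ0 (Z ω)) :=
    ((show Measurable fun z => gt1 z - gt0 z - ψ0 z by fun_prop).comp
      (comap_measurable Z)).stronglyMeasurable
  have hχm : StronglyMeasurable[MeasurableSpace.comap Z inferInstance]
      (fun ω => ψ0 (Z ω) + ψ1 (Z ω)) :=
    ((show Measurable fun z => ψ0 z + ψ1 z by fun_prop).comp
      (comap_measurable Z)).stronglyMeasurable
  have hcond := condExp_add_mul_add_mul_ae_eq hmZ (hTm.prodMk hZm).comap_le hAm hHm hχm
    (((hgt12.sub hgt02).sub hψ0).integrable one_le_two) hHU (hU2.integrable one_le_two)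
    ((hT.mul (hψ0.add hψ1)).integrable one_le_two) (hT.integrable le_top) hU hprop.symm
  rw [hdecomp]
  filter_upwards [hcond] with ω h
  rw [h]
  simp only [ψ0, ψ1, Pi.add_apply, Pi.mul_apply]
  ring

end InteractiveRegression

theorem double_robustness_propensity_general
    {Ω : Type*} [MeasurableSpace Ω] (P : Measure Ω) [IsProbabilityMeasure P]
    {𝓩 : Type*} [MeasurableSpace 𝓩]
    (Y T : Ω → ℝ) (Z : Ω → 𝓩)
    (hTm : Measurable T) (hZm : Measurable Z)
    (hTbin : ∀ ω, T ω = 0 ∨ T ω = 1)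
    (g0 g1 p : 𝓩 → ℝ) (hg0m : Measurable g0) (hg1m : Measurable g1)
    (hU : MeasureTheory.condExp
        (MeasurableSpace.comap (fun ω => (T ω, Z ω)) inferInstance) P
        (fun ω => Y ω - (if T ω = 1 then g1 (Z ω) else g0 (Z ω))) =ᵐ[P] 0)
    (hprop : (fun ω => p (Z ω)) =ᵐ[P]
        MeasureTheory.condExp (MeasurableSpace.comap Z inferInstance) P T)
    (gt0 gt1 pt : 𝓩 → ℝ)
    (hgt0m : Measurable gt0) (hgt1m : Measurable gt1) (hptm : Measurable pt)
    (ε : ℝ) (hε0 : 0 < ε)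
    (hptbd : ∀ᵐ ω ∂P, ε ≤ pt (Z ω) ∧ pt (Z ω) ≤ 1 - ε)
    (θ : Ω → ℝ) (hθ : θ = fun ω => g1 (Z ω) - g0 (Z ω))
    (θt : Ω → ℝ) (hθt : θt = fun ω => gt1 (Z ω) - gt0 (Z ω))
    (Ht : Ω → ℝ) (hHt : Ht = fun ω => T ω / pt (Z ω) - (1 - T ω) / (1 - pt (Z ω)))
    (c : Ω → ℝ)
    (hc : c = fun ω => gt1 (Z ω) - gt0 (Z ω) +
      Ht ω * (Y ω - (if T ω = 1 then gt1 (Z ω) else gt0 (Z ω))))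
    (bias1 bias2 : Ω → ℝ)
    (hbias1 : bias1 = fun ω => (p (Z ω) / pt (Z ω) - 1) * (g1 (Z ω) - gt1 (Z ω)))
    (hbias2 : bias2 = fun ω =>
      (1 - (1 - p (Z ω)) / (1 - pt (Z ω))) * (g0 (Z ω) - gt0 (Z ω)))
    (cov : (Ω → ℝ) → (Ω → ℝ) → ℝ)
    (hcov : ∀ f g : Ω → ℝ, cov f g =
      ∫ ω, (f ω - ∫ m, f m ∂P) * (g ω - ∫ m, g m ∂P) ∂P)
    (hY2 : MemLp Y 2 P)
    (hg02 : MemLp (fun ω => g0 (Z ω)) 2 P) (hg12 : MemLp (fun ω => g1 (Z ω)) 2 P)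
    (hgt02 : MemLp (fun ω => gt0 (Z ω)) 2 P) (hgt12 : MemLp (fun ω => gt1 (Z ω)) 2 P)
    (hvar : 0 < cov θt θt)
    (hpteq : (fun ω => pt (Z ω)) =ᵐ[P] (fun ω => p (Z ω)))
    :
    (bias1 =ᵐ[P] 0) ∧ (bias2 =ᵐ[P] 0) ∧
    (∀ a b : ℝ,
      ((∫ ω, (c ω - a - b * (θt ω - ∫ m, θt m ∂P)) ∂P = 0) ∧
        (∫ ω, (c ω - a - b * (θt ω - ∫ m, θt m ∂P)) * (θt ω - ∫ m, θt m ∂P) ∂P = 0))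
      → (a = ∫ ω, θ ω ∂P ∧ b = cov θ θt / cov θt θt)) := by
  subst hθ hθt hHt hbias1 hbias2
  obtain rfl : c = drLabel Y T Z gt0 gt1 pt := hc
  obtain rfl : cov = fun f g => cov[f, g; P] := funext fun f => funext (hcov f)
  have hpt₀ : ∀ᵐ ω ∂P, pt (Z ω) ≠ 0 ∧ 1 - pt (Z ω) ≠ 0 :=
    hptbd.mono fun ω h => ⟨by linarith [h.1], by linarith [h.2]⟩
  have hbias₁ : (fun ω => (p (Z ω) / pt (Z ω) - 1) * (g1 (Z ω) - gt1 (Z ω))) =ᵐ[P] 0 := by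
    filter_upwards [hpteq, hpt₀] with ω he h
    simp [← he, div_self h.1]
  have hbias₂ : (fun ω => (1 - (1 - p (Z ω)) / (1 - pt (Z ω))) * (g0 (Z ω) - gt0 (Z ω)))
      =ᵐ[P] 0 := by
    filter_upwards [hpteq, hpt₀] with ω he h
    simp [← he, div_self h.2]
  refine ⟨hbias₁, hbias₂, fun a b ⟨h₁, h₂⟩ => ?_⟩
  have hcθ : P[drLabel Y T Z gt0 gt1 pt | MeasurableSpace.comap Z inferInstance]
      =ᵐ[P] fun ω => g1 (Z ω) - g0 (Z ω) := by
    filter_upwards [condExp_drLabel_ae_eq hTm hZm hTbin hg0m hg1m hgt0m hgt1m hptm hU hprop hε0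
      hptbd hY2 hg02 hg12 hgt02 hgt12, hbias₁, hbias₂] with ω h h₁ h₂
    rw [h, h₁, h₂, Pi.zero_apply, add_zero, add_zero]
  have hc2 := memLp_drLabel hTm hZm hTbin hptm hε0 hptbd hY2 hgt02 hgt12
  have hθ2 : MemLp (fun ω => g1 (Z ω) - g0 (Z ω)) 2 P := hg12.sub hg02
  have hθt2 : MemLp (fun ω => gt1 (Z ω) - gt0 (Z ω)) 2 P := hgt12.sub hgt02
  have hθtm : StronglyMeasurable[MeasurableSpace.comap Z inferInstance]
      (fun ω => gt1 (Z ω) - gt0 (Z ω)) :=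
    ((hgt1m.sub hgt0m).comp (comap_measurable Z)).stronglyMeasurable
  obtain ⟨rfl, rfl⟩ := eq_of_normal_equations hc2 hθt2 hvar.ne' h₁ h₂
  exact ⟨(integral_condExp hZm.comap_le).symm.trans (integral_congr_ae hcθ), by
    rw [covariance_eq_of_condExp_ae_eq hZm.comap_le hc2 hθ2 hθt2 hθtm hcθ]⟩

theorem double_robustness_propensity
    {Ω : Type*} [MeasurableSpace Ω] (P : Measure Ω) [IsProbabilityMeasure P]
    {𝓩 : Type*} [MeasurableSpace 𝓩]
    (Y T : Ω → ℝ) (Z : Ω → 𝓩)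
    (hYm : Measurable Y) (hTm : Measurable T) (hZm : Measurable Z)
    (hTbin : ∀ ω, T ω = 0 ∨ T ω = 1)
    (g0 g1 p : 𝓩 → ℝ) (hg0m : Measurable g0) (hg1m : Measurable g1) (hpm : Measurable p)
    (hU : MeasureTheory.condExp
        (MeasurableSpace.comap (fun ω => (T ω, Z ω)) inferInstance) P
        (fun ω => Y ω - (if T ω = 1 then g1 (Z ω) else g0 (Z ω))) =ᵐ[P] 0)
    (hprop : (fun ω => p (Z ω)) =ᵐ[P]
        MeasureTheory.condExp (MeasurableSpace.comap Z inferInstance) P T)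
    (hpbd : ∀ᵐ ω ∂P, 0 < p (Z ω) ∧ p (Z ω) < 1)
    (gt0 gt1 pt : 𝓩 → ℝ)
    (hgt0m : Measurable gt0) (hgt1m : Measurable gt1) (hptm : Measurable pt)
    (ε : ℝ) (hε0 : 0 < ε) (hε1 : ε < 1 / 2)
    (hptbd : ∀ᵐ ω ∂P, ε ≤ pt (Z ω) ∧ pt (Z ω) ≤ 1 - ε)
    (θ : Ω → ℝ) (hθ : θ = fun ω => g1 (Z ω) - g0 (Z ω))
    (θt : Ω → ℝ) (hθt : θt = fun ω => gt1 (Z ω) - gt0 (Z ω))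
    (Ht : Ω → ℝ) (hHt : Ht = fun ω => T ω / pt (Z ω) - (1 - T ω) / (1 - pt (Z ω)))
    (c : Ω → ℝ)
    (hc : c = fun ω => gt1 (Z ω) - gt0 (Z ω) +
      Ht ω * (Y ω - (if T ω = 1 then gt1 (Z ω) else gt0 (Z ω))))
    (bias1 bias2 : Ω → ℝ)
    (hbias1 : bias1 = fun ω => (p (Z ω) / pt (Z ω) - 1) * (g1 (Z ω) - gt1 (Z ω)))
    (hbias2 : bias2 = fun ω =>
      (1 - (1 - p (Z ω)) / (1 - pt (Z ω))) * (g0 (Z ω) - gt0 (Z ω)))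
    (cov : (Ω → ℝ) → (Ω → ℝ) → ℝ)
    (hcov : ∀ f g : Ω → ℝ, cov f g =
      ∫ ω, (f ω - ∫ m, f m ∂P) * (g ω - ∫ m, g m ∂P) ∂P)
    (hY2 : MemLp Y 2 P)
    (hg02 : MemLp (fun ω => g0 (Z ω)) 2 P) (hg12 : MemLp (fun ω => g1 (Z ω)) 2 P)
    (hgt02 : MemLp (fun ω => gt0 (Z ω)) 2 P) (hgt12 : MemLp (fun ω => gt1 (Z ω)) 2 P)
    (hvar : 0 < cov θt θt)
    (hpteq : (fun ω => pt (Z ω)) =ᵐ[P] (fun ω => p (Z ω)))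
    :
    (bias1 =ᵐ[P] 0) ∧ (bias2 =ᵐ[P] 0) ∧
    (∀ a b : ℝ,
      ((∫ ω, (c ω - a - b * (θt ω - ∫ m, θt m ∂P)) ∂P = 0) ∧
        (∫ ω, (c ω - a - b * (θt ω - ∫ m, θt m ∂P)) * (θt ω - ∫ m, θt m ∂P) ∂P = 0))
      → (a = ∫ ω, θ ω ∂P ∧ b = cov θ θt / cov θt θt)) :=
  double_robustness_propensity_general P Y T Z hTm hZm hTbin g0 g1 p hg0m hg1m hU hprop gt0 gt1 pt
    hgt0m hgt1m hptm ε hε0 hptbd θ hθ θt hθt Ht hHt c hc bias1 bias2 hbias1 hbias2 cov hcov hY2 hg02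
    hg12 hgt02 hgt12 hvar hpteq
end

section
/- (Population identification of the ATET score with true nuisances.) Under the IRM, assume δ ≤ μ(Z) ≤ 1 − δ almost surely for some δ ∈ (0, 1/2), define H := T/μ(Z) − (1 − T)/(1 − μ(Z)), assume P(T = 1) > 0, and assume Y, g_0(Z), g_1(Z) are integrable. Then E[(T/E[T])·(g_1(Z) − g_0(Z)) + (μ(Z)/E[T])·(Y − g_T(Z))·H] = E[θ(Z) | T = 1], i.e., the population version of the doubly robust ATET score with true nuisance functions identifies the average treatment effect on the treated θ_ATET := E[g_1(Z) − g_0(Z) | T = 1]. -/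
open MeasureTheory ProbabilityTheory

/-! The score is `(T θ + p(Z) H U) / E[T]` with `U := Y - g_T(Z)`. The weight `p(Z) H` is a function
of `(T, Z)`, bounded by `δ⁻¹` thanks to overlap, so pulling it out of `E[U | T, Z] = 0` kills the
second term. Since `T` is the indicator of `{T = 1}`, the first term is
`E[T θ] / P(T = 1) = E[θ | T = 1]`. -/

theorem eq_indicator_one_of_forall_eq_zero_or_eq_one {α : Type*} {T : α → ℝ}
    (hT : ∀ a, T a = 0 ∨ T a = 1) : T = {a | T a = 1}.indicator 1 := by
  funext a
  rcases hT a with h | h <;> simp [Set.indicator, h]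

theorem abs_mul_sub_div_le_inv {t q δ : ℝ} (ht : t = 0 ∨ t = 1) (hδ : 0 < δ) (hδq : δ ≤ q)
    (hq : q ≤ 1 - δ) :
    |q * (t / q - (1 - t) / (1 - q))| ≤ δ⁻¹ := by
  rcases ht with rfl | rfl
  · have h1q : 0 < 1 - q := by linarith
    have h_eq : q * (0 / q - (1 - 0) / (1 - q)) = -(q / (1 - q)) := by ring
    rw [h_eq, abs_neg, abs_of_nonneg (div_nonneg (by linarith) h1q.le), div_le_iff₀ h1q]
    calc q ≤ δ⁻¹ * δ := by rw [inv_mul_cancel₀ hδ.ne']; linarith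
      _ ≤ δ⁻¹ * (1 - q) := by gcongr; linarith
  · have h_eq : q * (1 / q - (1 - 1) / (1 - q)) = 1 := by
      rw [sub_self, zero_div, sub_zero, mul_one_div_cancel (hδ.trans_le hδq).ne']
    rw [h_eq, abs_one]
    exact (one_le_inv₀ hδ).2 (by linarith)

section

variable {Ω : Type*} {m mΩ : MeasurableSpace Ω} {μ : Measure Ω}

theorem integral_mul_eq_zero_of_condExp_eq_zero [IsFiniteMeasure μ] (hm : m ≤ mΩ)
    {f g : Ω → ℝ} (hf : AEStronglyMeasurable[m] f μ) {C : ℝ} (hf_bound : ∀ᵐ ω ∂μ, ‖f ω‖ ≤ C)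
    (hg : Integrable g μ) (hg_zero : μ[g | m] =ᵐ[μ] 0) :
    ∫ ω, f ω * g ω ∂μ = 0 := by
  have h_pull : μ[f * g | m] =ᵐ[μ] 0 := by
    filter_upwards [condExp_stronglyMeasurable_mul_of_bound₀ hm hf hg C hf_bound, hg_zero]
      with ω h_ω h_zero
    simp [h_ω, h_zero]
  calc ∫ ω, f ω * g ω ∂μ = ∫ ω, (μ[f * g | m]) ω ∂μ := (integral_condExp hm).symm
    _ = 0 := by simp [integral_congr_ae h_pull]

theorem integral_cond_eq_inv_mul_setIntegral (s : Set Ω) (g : Ω → ℝ) :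
    ∫ ω, g ω ∂μ[|s] = (μ.real s)⁻¹ * ∫ ω in s, g ω ∂μ := by
  rw [ProbabilityTheory.cond, integral_smul_measure, ENNReal.toReal_inv, smul_eq_mul,
    measureReal_def]

theorem integral_indicator_one_mul_div_eq_integral_cond {s : Set Ω} (hs : MeasurableSet s)
    (g : Ω → ℝ) :
    (∫ ω, s.indicator 1 ω * g ω ∂μ) / ∫ ω, s.indicator 1 ω ∂μ = ∫ ω, g ω ∂μ[|s] := by
  simp_rw [← Set.indicator_mul_left, Pi.one_apply, one_mul]
  rw [integral_indicator hs, integral_indicator_one hs, integral_cond_eq_inv_mul_setIntegral,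
    div_eq_inv_mul]

theorem integral_mul_div_integral_eq_integral_cond {T : Ω → ℝ} (hT : Measurable T)
    (hT_bin : ∀ ω, T ω = 0 ∨ T ω = 1) (g : Ω → ℝ) :
    (∫ ω, T ω * g ω ∂μ) / ∫ ω, T ω ∂μ = ∫ ω, g ω ∂μ[|{ω | T ω = 1}] := by
  conv_lhs => rw [eq_indicator_one_of_forall_eq_zero_or_eq_one hT_bin]
  exact integral_indicator_one_mul_div_eq_integral_cond (hT (measurableSet_singleton 1)) g

end

theorem atet_score_identification_general
    {Ω : Type*} [MeasurableSpace Ω] (P : Measure Ω) [IsProbabilityMeasure P]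
    {𝓩 : Type*} [MeasurableSpace 𝓩]
    (Y T : Ω → ℝ) (Z : Ω → 𝓩)
    (hTm : Measurable T) (hZm : Measurable Z)
    (hTbin : ∀ ω, T ω = 0 ∨ T ω = 1)
    (g0 g1 p : 𝓩 → ℝ) (hpm : Measurable p)
    (hU : MeasureTheory.condExp
        (MeasurableSpace.comap (fun ω => (T ω, Z ω)) inferInstance) P
        (fun ω => Y ω - (if T ω = 1 then g1 (Z ω) else g0 (Z ω))) =ᵐ[P] 0)
    (θ : Ω → ℝ) (hθ : θ = fun ω => g1 (Z ω) - g0 (Z ω))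
    (δ : ℝ) (hδ0 : 0 < δ)
    (hpδ : ∀ᵐ ω ∂P, δ ≤ p (Z ω) ∧ p (Z ω) ≤ 1 - δ)
    (H : Ω → ℝ)
    (hH : H = fun ω => T ω / p (Z ω) - (1 - T ω) / (1 - p (Z ω)))
    (hYint : Integrable Y P)
    (hg0int : Integrable (fun ω => g0 (Z ω)) P) (hg1int : Integrable (fun ω => g1 (Z ω)) P)
    :
    ∫ ω, ((T ω / ∫ m, T m ∂P) * (g1 (Z ω) - g0 (Z ω)) +
        (p (Z ω) / ∫ m, T m ∂P) *
          (Y ω - (if T ω = 1 then g1 (Z ω) else g0 (Z ω))) * H ω) ∂P =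
      ∫ ω, θ ω ∂(ProbabilityTheory.cond P {ω | T ω = 1}) := by
  subst hθ
  set U := fun ω => Y ω - (if T ω = 1 then g1 (Z ω) else g0 (Z ω))
  set c := ∫ m, T m ∂P
  have hmTZ := (hTm.prodMk hZm).comap_le
  set mTZ := MeasurableSpace.comap (fun ω => (T ω, Z ω)) inferInstance
  have h_weight_meas : AEStronglyMeasurable[mTZ] (fun ω => p (Z ω) * H ω) P := by
    have hφ : Measurable fun x : ℝ × 𝓩 => p x.2 * (x.1 / p x.2 - (1 - x.1) / (1 - p x.2)) := by
      fun_prop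
    rw [hH]
    exact (hφ.comp (comap_measurable _)).aestronglyMeasurable
  have h_weight_bound : ∀ᵐ ω ∂P, ‖p (Z ω) * H ω‖ ≤ δ⁻¹ := by
    filter_upwards [hpδ] with ω ⟨hδp, hp⟩
    rw [hH, Real.norm_eq_abs]
    exact abs_mul_sub_div_le_inv (hTbin ω) hδ0 hδp hp
  have hU_int : Integrable U P := hYint.sub <| Integrable.piecewise (s := {ω | T ω = 1})
    (hTm (measurableSet_singleton 1)) hg1int.integrableOn hg0int.integrableOn
  have h_orth : ∫ ω, p (Z ω) * H ω * U ω ∂P = 0 :=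
    integral_mul_eq_zero_of_condExp_eq_zero hmTZ h_weight_meas h_weight_bound hU_int hU
  have hTθ_int : Integrable (fun ω => T ω * (g1 (Z ω) - g0 (Z ω))) P :=
    (hg1int.sub hg0int).bdd_mul hTm.aestronglyMeasurable (c := 1) (.of_forall fun ω => by
      rcases hTbin ω with h | h <;> simp [h])
  have hUw_int : Integrable (fun ω => p (Z ω) * H ω * U ω) P :=
    hU_int.bdd_mul (h_weight_meas.mono hmTZ) h_weight_bound
  calc _ = ∫ ω, (T ω * (g1 (Z ω) - g0 (Z ω)) / c + p (Z ω) * H ω * U ω / c) ∂P := by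
        congr 1; ext ω; ring
    _ = (∫ ω, T ω * (g1 (Z ω) - g0 (Z ω)) ∂P) / c + (∫ ω, p (Z ω) * H ω * U ω ∂P) / c := by
        rw [integral_add (hTθ_int.div_const c) (hUw_int.div_const c), integral_div, integral_div]
    _ = _ := by
        rw [h_orth, zero_div, add_zero, integral_mul_div_integral_eq_integral_cond hTm hTbin]

theorem atet_score_identification
    {Ω : Type*} [MeasurableSpace Ω] (P : Measure Ω) [IsProbabilityMeasure P]
    {𝓩 : Type*} [MeasurableSpace 𝓩]
    (Y T : Ω → ℝ) (Z : Ω → 𝓩)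
    (hYm : Measurable Y) (hTm : Measurable T) (hZm : Measurable Z)
    (hTbin : ∀ ω, T ω = 0 ∨ T ω = 1)
    (g0 g1 p : 𝓩 → ℝ) (hg0m : Measurable g0) (hg1m : Measurable g1) (hpm : Measurable p)
    (hU : MeasureTheory.condExp
        (MeasurableSpace.comap (fun ω => (T ω, Z ω)) inferInstance) P
        (fun ω => Y ω - (if T ω = 1 then g1 (Z ω) else g0 (Z ω))) =ᵐ[P] 0)
    (hprop : (fun ω => p (Z ω)) =ᵐ[P]
        MeasureTheory.condExp (MeasurableSpace.comap Z inferInstance) P T)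
    (hpbd : ∀ᵐ ω ∂P, 0 < p (Z ω) ∧ p (Z ω) < 1)
    (θ : Ω → ℝ) (hθ : θ = fun ω => g1 (Z ω) - g0 (Z ω))
    (δ : ℝ) (hδ0 : 0 < δ) (hδ1 : δ < 1 / 2)
    (hpδ : ∀ᵐ ω ∂P, δ ≤ p (Z ω) ∧ p (Z ω) ≤ 1 - δ)
    (H : Ω → ℝ)
    (hH : H = fun ω => T ω / p (Z ω) - (1 - T ω) / (1 - p (Z ω)))
    (hT1 : 0 < P {ω | T ω = 1})
    (hYint : Integrable Y P)
    (hg0int : Integrable (fun ω => g0 (Z ω)) P) (hg1int : Integrable (fun ω => g1 (Z ω)) P)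
    :
    ∫ ω, ((T ω / ∫ m, T m ∂P) * (g1 (Z ω) - g0 (Z ω)) +
        (p (Z ω) / ∫ m, T m ∂P) *
          (Y ω - (if T ω = 1 then g1 (Z ω) else g0 (Z ω))) * H ω) ∂P =
      ∫ ω, θ ω ∂(ProbabilityTheory.cond P {ω | T ω = 1}) :=
  atet_score_identification_general P Y T Z hTm hZm hTbin g0 g1 p hpm hU θ hθ δ hδ0 hpδ H hH hYint
    hg0int hg1int
end
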